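/- arXiv:2306.03822 — 5 statements merged into one kernel-verified Lean document; each statement's English description precedes it below -/
import Mathlib

section
/- Let n ≥ 1, q_min < q_max, strikes K and spot values (s_ℓ)_{ℓ<n} in ℝ. Define P(q) = Σ_{ℓ<n} q_ℓ (s_ℓ - K). Then the supremum of P over admissible sequences (q_ℓ ∈ [q_min,q_max], Σ q_ℓ ∈ [Q_min,Q_max]) equals q_min · Σ_{ℓ<n}(s_ℓ - K) + (q_max - q_min) times the supremum of P over normalized admissible sequences (q_ℓ ∈ [0,1], Σ q_ℓ ∈ [Q̃_min, Q̃_max]), where Q̃_min = (Q_min - n·q_min)/(q_max - q_min) and Q̃_max = (Q_max - n·q_min)/(q_max - q_min). -/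
lemma affine_csSup_image (a c : ℝ) (ha : 0 < a) (S : Set ℝ) (hS : S.Nonempty)
    (hb : BddAbove S) :
    sSup ((fun x => c + a * x) '' S) = c + a * sSup S := by
  apply IsLUB.csSup_eq
  · constructor
    · rintro y ⟨x, hx, rfl⟩
      have hle := le_csSup hb hx
      show c + a * x ≤ c + a * sSup S
      nlinarith
    · intro b hbub
      have hb' : sSup S ≤ (b - c) / a := by
        apply csSup_le hS
        intro x hx
        have hxb := hbub ⟨x, hx, rfl⟩
        simp only at hxb
        rw [le_div_iff₀ ha]; linarith
      have : a * sSup S ≤ b - c := by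
        rw [← le_div_iff₀' ha]; exact hb'
      linarith
  · exact hS.image _

theorem swing_price_decomposition (n : ℕ) (hn : 1 ≤ n)
    (qmin qmax Qmin Qmax K : ℝ) (h : qmin < qmax) (hQ : Qmin ≤ Qmax)
    (hne1 : n * qmin ≤ Qmax) (hne2 : Qmin ≤ n * qmax)
    (s : Fin n → ℝ) :
    sSup ((fun q : Fin n → ℝ => ∑ ℓ, q ℓ * (s ℓ - K)) ''
        {q : Fin n → ℝ | (∀ ℓ, q ℓ ∈ Set.Icc qmin qmax) ∧ (∑ ℓ, q ℓ) ∈ Set.Icc Qmin Qmax})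
      = qmin * (∑ ℓ, (s ℓ - K)) + (qmax - qmin) *
        sSup ((fun q : Fin n → ℝ => ∑ ℓ, q ℓ * (s ℓ - K)) ''
          {q : Fin n → ℝ | (∀ ℓ, q ℓ ∈ Set.Icc (0 : ℝ) 1) ∧
            (∑ ℓ, q ℓ) ∈ Set.Icc ((Qmin - n * qmin) / (qmax - qmin))
              ((Qmax - n * qmin) / (qmax - qmin))}) := by
  set a : ℝ := qmax - qmin with ha_def
  have ha : 0 < a := by rw [ha_def]; linarith
  set c : ℝ := qmin * ∑ ℓ, (s ℓ - K) with hc_def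
  set S2 : Set ℝ := ((fun q : Fin n → ℝ => ∑ ℓ, q ℓ * (s ℓ - K)) ''
          {q : Fin n → ℝ | (∀ ℓ, q ℓ ∈ Set.Icc (0 : ℝ) 1) ∧
            (∑ ℓ, q ℓ) ∈ Set.Icc ((Qmin - n * qmin) / (qmax - qmin))
              ((Qmax - n * qmin) / (qmax - qmin))}) with hS2_def
  -- the two image sets are related by the affine map
  have hset : ((fun q : Fin n → ℝ => ∑ ℓ, q ℓ * (s ℓ - K)) ''
        {q : Fin n → ℝ | (∀ ℓ, q ℓ ∈ Set.Icc qmin qmax) ∧ (∑ ℓ, q ℓ) ∈ Set.Icc Qmin Qmax})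
      = (fun x => c + a * x) '' S2 := by
    ext y
    constructor
    · rintro ⟨q, ⟨hq, hsum⟩, rfl⟩
      refine ⟨∑ ℓ, ((q ℓ - qmin) / a) * (s ℓ - K),
        ⟨fun ℓ => (q ℓ - qmin) / a, ⟨?_, ?_⟩, rfl⟩, ?_⟩
      · intro ℓ
        obtain ⟨h1, h2⟩ := hq ℓ
        constructor
        · exact div_nonneg (by linarith) ha.le
        · rw [div_le_one ha, ha_def]; linarith
      · have hsum' : ∑ ℓ, (q ℓ - qmin) / a = (∑ ℓ, q ℓ - n * qmin) / a := by
          rw [← Finset.sum_div, Finset.sum_sub_distrib, Finset.sum_const,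
            Finset.card_univ, Fintype.card_fin, nsmul_eq_mul]
        rw [hsum']
        obtain ⟨h1, h2⟩ := hsum
        constructor
        · rw [← ha_def]; gcongr
        · rw [← ha_def]; gcongr
      · show c + a * (∑ ℓ, ((q ℓ - qmin) / a) * (s ℓ - K)) = ∑ ℓ, q ℓ * (s ℓ - K)
        rw [hc_def, Finset.mul_sum, Finset.mul_sum, ← Finset.sum_add_distrib]
        refine Finset.sum_congr rfl fun ℓ _ => ?_
        field_simp
        ring
    · rintro ⟨y, ⟨p, ⟨hp, hpsum⟩, rfl⟩, rfl⟩
      refine ⟨fun ℓ => qmin + a * p ℓ, ⟨?_, ?_⟩, ?_⟩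
      · intro ℓ
        obtain ⟨h1, h2⟩ := hp ℓ
        constructor
        · show qmin ≤ qmin + a * p ℓ
          nlinarith
        · show qmin + a * p ℓ ≤ qmax
          rw [ha_def]
          nlinarith
      · have hsum' : ∑ ℓ, (qmin + a * p ℓ) = n * qmin + a * ∑ ℓ, p ℓ := by
          rw [Finset.sum_add_distrib, Finset.sum_const, Finset.card_univ,
            Fintype.card_fin, nsmul_eq_mul, Finset.mul_sum]
        show (∑ ℓ, (qmin + a * p ℓ)) ∈ Set.Icc Qmin Qmax
        rw [hsum']
        obtain ⟨h1, h2⟩ := hpsum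
        rw [← ha_def] at h1 h2
        rw [div_le_iff₀ ha] at h1
        rw [le_div_iff₀ ha] at h2
        constructor
        · nlinarith
        · nlinarith
      · show (∑ ℓ, (qmin + a * p ℓ) * (s ℓ - K)) = c + a * ∑ ℓ, p ℓ * (s ℓ - K)
        rw [hc_def, Finset.mul_sum, Finset.mul_sum, ← Finset.sum_add_distrib]
        exact Finset.sum_congr rfl fun ℓ _ => by ring
  rw [hset]
  apply affine_csSup_image a c ha S2
  · -- nonempty
    set T : ℝ := max ((Qmin - n * qmin) / a) 0 with hT_def
    have hn0 : (0:ℝ) < n := by exact_mod_cast hn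
    have hTub : T ≤ n := by
      apply max_le
      · rw [div_le_iff₀ ha, ha_def]; nlinarith
      · positivity
    have hT0 : 0 ≤ T := le_max_right _ _
    refine ⟨∑ ℓ, (T / n) * (s ℓ - K), ⟨fun _ => T / n, ⟨?_, ?_⟩, rfl⟩⟩
    · intro ℓ
      constructor
      · positivity
      · rw [div_le_one hn0]; exact hTub
    · have hsc : ∑ _ℓ : Fin n, T / n = T := by
        rw [Finset.sum_const, Finset.card_univ, Fintype.card_fin, nsmul_eq_mul]
        field_simp
      rw [hsc]
      constructor
      · rw [← ha_def]; exact le_max_left _ _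
      · rw [← ha_def]
        apply max_le
        · gcongr
        · exact div_nonneg (by linarith) ha.le
  · -- bdd above
    refine ⟨∑ ℓ, |s ℓ - K|, ?_⟩
    rintro y ⟨p, ⟨hp, _⟩, rfl⟩
    apply Finset.sum_le_sum
    intro ℓ _
    obtain ⟨h1, h2⟩ := hp ℓ
    calc p ℓ * (s ℓ - K) ≤ |p ℓ * (s ℓ - K)| := le_abs_self _
      _ = |p ℓ| * |s ℓ - K| := abs_mul _ _
      _ ≤ 1 * |s ℓ - K| := by
          apply mul_le_mul_of_nonneg_right _ (abs_nonneg _)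
          rw [abs_of_nonneg h1]; exact h2
      _ = |s ℓ - K| := one_mul _
end

section
/- With Q^down and Q^up as above (q_min = 0, 0 ≤ Q_min ≤ Q_max ≤ n·q_max), for any 0 ≤ ℓ ≤ n-1 and any Q with Q^down(t_ℓ) ≤ Q ≤ Q^up(t_ℓ), the interval [max(Q^down(t_{ℓ+1}), Q) , min(Q^up(t_{ℓ+1}), Q + q_max)] is nonempty; i.e. there exists an admissible purchase q ∈ [0, q_max] such that Q + q lies between Q^down(t_{ℓ+1}) and Q^up(t_{ℓ+1}). -/
theorem physical_space_viability (n : ℕ) (hn : 1 ≤ n)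
    (qmax Qmin Qmax : ℝ) (hq : 0 < qmax)
    (h0 : 0 ≤ Qmin) (h1 : Qmin ≤ Qmax) (h2 : Qmax ≤ n * qmax)
    (Qdown Qup : ℕ → ℝ)
    (hd0 : Qdown 0 = 0) (hdn : Qdown n = Qmin)
    (hd : ∀ ℓ, 1 ≤ ℓ → ℓ ≤ n - 1 → Qdown ℓ = max 0 (Qmin - ((n : ℝ) - ℓ) * qmax))
    (hu0 : Qup 0 = 0) (hun : Qup n = Qmax)
    (hu : ∀ ℓ, 1 ≤ ℓ → ℓ ≤ n - 1 → Qup ℓ = min ((ℓ : ℝ) * qmax) Qmax) :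
    ∀ ℓ < n, ∀ Q : ℝ, Qdown ℓ ≤ Q → Q ≤ Qup ℓ →
      max (Qdown (ℓ + 1)) Q ≤ min (Qup (ℓ + 1)) (Q + qmax) ∧
      ∃ q : ℝ, 0 ≤ q ∧ q ≤ qmax ∧
        Qdown (ℓ + 1) ≤ Q + q ∧ Q + q ≤ Qup (ℓ + 1) := by
  intro ℓ hℓ Q hQd hQu
  have h0max : (0:ℝ) ≤ Qmax := le_trans h0 h1
  have key : Qdown (ℓ+1) ≤ Qup (ℓ+1) ∧ Qdown (ℓ+1) ≤ Q + qmax ∧ Q ≤ Qup (ℓ+1) := by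
    rcases eq_or_lt_of_le (Nat.succ_le_of_lt hℓ) with hcase | hcase
    · -- ℓ + 1 = n
      have hcase' : ℓ + 1 = n := hcase
      rw [hcase', hdn, hun]
      rcases Nat.eq_zero_or_pos ℓ with h | h
      · -- ℓ = 0, n = 1
        subst h
        rw [hd0] at hQd; rw [hu0] at hQu
        have hn1 : n = 1 := by omega
        subst hn1
        push_cast at h2
        exact ⟨h1, by linarith, by linarith⟩
      · -- 1 ≤ ℓ
        have hle : ℓ ≤ n - 1 := by omega
        rw [hd ℓ h hle] at hQd
        rw [hu ℓ h hle] at hQu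
        have hcast : ((n:ℝ) - ℓ) * qmax = qmax := by
          have : (n:ℝ) = (ℓ:ℝ) + 1 := by rw [← hcase']; push_cast; ring
          rw [this]; ring
        have h' : Qmin - ((n:ℝ) - ℓ) * qmax ≤ Q := le_trans (le_max_right _ _) hQd
        have h'' : Q ≤ Qmax := le_trans hQu (min_le_right _ _)
        exact ⟨h1, by linarith, h''⟩
    · -- ℓ + 1 ≤ n - 1
      have hle : ℓ + 1 ≤ n - 1 := by omega
      have hℓ2 : (ℓ:ℝ) + 2 ≤ (n:ℝ) := by exact_mod_cast (by omega : ℓ + 2 ≤ n)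
      rw [hd (ℓ+1) (by omega) hle, hu (ℓ+1) (by omega) hle]
      have hc1 : ((ℓ+1 : ℕ):ℝ) = (ℓ:ℝ) + 1 := by push_cast; ring
      rw [hc1]
      have hℓ0 : (0:ℝ) ≤ (ℓ:ℝ) := Nat.cast_nonneg ℓ
      have hQminn : Qmin ≤ (n:ℝ) * qmax := le_trans h1 h2
      have hQ0 : 0 ≤ Q := by
        rcases Nat.eq_zero_or_pos ℓ with h | h
        · subst h; rw [hd0] at hQd; exact hQd
        · exact le_trans (le_max_left _ _) (by rw [hd ℓ h (by omega)] at hQd; exact hQd)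
      have hQub : Q ≤ (ℓ:ℝ) * qmax ∧ Q ≤ Qmax := by
        rcases Nat.eq_zero_or_pos ℓ with h | h
        · subst h; rw [hu0] at hQu; push_cast
          constructor <;> nlinarith
        · rw [hu ℓ h (by omega)] at hQu
          exact ⟨le_trans hQu (min_le_left _ _), le_trans hQu (min_le_right _ _)⟩
      have hQdb : Qmin - ((n:ℝ) - ℓ) * qmax ≤ Q := by
        rcases Nat.eq_zero_or_pos ℓ with h | h
        · subst h; rw [hd0] at hQd; push_cast; nlinarith
        · rw [hd ℓ h (by omega)] at hQd
          exact le_trans (le_max_right _ _) hQd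
      obtain ⟨hQu1, hQu2⟩ := hQub
      refine ⟨?_, ?_, ?_⟩
      · apply max_le
        · exact le_min (by nlinarith) h0max
        · apply le_min
          · nlinarith
          · nlinarith
      · apply max_le
        · linarith
        · nlinarith
      · exact le_min (by nlinarith) hQu2
  obtain ⟨k1, k2, k3⟩ := key
  have hmain : max (Qdown (ℓ + 1)) Q ≤ min (Qup (ℓ + 1)) (Q + qmax) :=
    max_le (le_min k1 k2) (le_min k3 (by linarith))
  refine ⟨hmain, max (Qdown (ℓ+1)) Q - Q, by simp, ?_, ?_, ?_⟩
  · have := le_trans hmain (min_le_right _ _); linarith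
  · have := le_max_left (Qdown (ℓ+1)) Q; linarith
  · have := le_trans hmain (min_le_left _ _); linarith
end

section
/- Let ℓ < n, q_max > 0, 0 ≤ Q_min ≤ Q_max ≤ n·q_max, and let Q satisfy max(0, Q_min-(n-ℓ)q_max) ≤ Q ≤ min(ℓ·q_max, Q_max). Define A^-(Q) = max(Q^down(t_{ℓ+1}), Q) - Q and A^+(Q) = min(Q^up(t_{ℓ+1}), Q + q_max) - Q. Then 0 ≤ A^-(Q) ≤ A^+(Q) ≤ q_max. -/
theorem admissible_volume_interval (n : ℕ) (hn : 1 ≤ n)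
    (qmax Qmin Qmax : ℝ) (hq : 0 < qmax)
    (h0 : 0 ≤ Qmin) (h1 : Qmin ≤ Qmax) (h2 : Qmax ≤ n * qmax)
    (Qdown Qup : ℕ → ℝ)
    (hd0 : Qdown 0 = 0) (hdn : Qdown n = Qmin)
    (hd : ∀ ℓ, 1 ≤ ℓ → ℓ ≤ n - 1 → Qdown ℓ = max 0 (Qmin - ((n : ℝ) - ℓ) * qmax))
    (hu0 : Qup 0 = 0) (hun : Qup n = Qmax)
    (hu : ∀ ℓ, 1 ≤ ℓ → ℓ ≤ n - 1 → Qup ℓ = min ((ℓ : ℝ) * qmax) Qmax) :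
    ∀ ℓ < n, ∀ Q : ℝ,
      max 0 (Qmin - ((n : ℝ) - ℓ) * qmax) ≤ Q → Q ≤ min ((ℓ : ℝ) * qmax) Qmax →
      0 ≤ max (Qdown (ℓ + 1)) Q - Q ∧
      max (Qdown (ℓ + 1)) Q - Q ≤ min (Qup (ℓ + 1)) (Q + qmax) - Q ∧
      min (Qup (ℓ + 1)) (Q + qmax) - Q ≤ qmax := by
  intro ℓ hℓ Q hQ1 hQ2
  have hQ0 : (0:ℝ) ≤ Q := le_trans (le_max_left _ _) hQ1
  have hQlow : Qmin - ((n : ℝ) - ℓ) * qmax ≤ Q := le_trans (le_max_right _ _) hQ1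
  have hQu1 : Q ≤ (ℓ : ℝ) * qmax := le_trans hQ2 (min_le_left _ _)
  have hQu2 : Q ≤ Qmax := le_trans hQ2 (min_le_right _ _)
  have hln : (ℓ : ℝ) ≤ (n : ℝ) - 1 := by
    have : (ℓ : ℝ) + 1 ≤ (n : ℝ) := by exact_mod_cast hℓ
    linarith
  refine ⟨by simp, ?_, by have := min_le_right (Qup (ℓ + 1)) (Q + qmax); linarith⟩
  have key : max (Qdown (ℓ + 1)) Q ≤ min (Qup (ℓ + 1)) (Q + qmax) := by
    rcases eq_or_lt_of_le (Nat.succ_le_of_lt hℓ) with h | h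
    · rw [show ℓ + 1 = n from h, hdn, hun]
      have hnl : ((n : ℝ) - ℓ) = 1 := by
        have : ((ℓ:ℝ)) + 1 = (n:ℝ) := by exact_mod_cast congrArg (Nat.cast : ℕ → ℝ) h
        linarith
      rw [hnl] at hQlow
      exact max_le (le_min h1 (by linarith)) (le_min hQu2 (by linarith))
    · have hle : ℓ + 1 ≤ n - 1 := by omega
      rw [hd (ℓ+1) (by omega) hle, hu (ℓ+1) (by omega) hle]
      push_cast
      have hnl1 : (1:ℝ) ≤ (n : ℝ) - (ℓ + 1) := by
        have : ((ℓ:ℝ)) + 2 ≤ (n:ℝ) := by exact_mod_cast (by omega : ℓ + 2 ≤ n)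
        linarith
      refine max_le (max_le ?_ ?_) ?_
      · exact le_min (le_min (by positivity) (le_trans h0 h1)) (by linarith)
      · refine le_min (le_min ?_ ?_) (by nlinarith)
        · nlinarith
        · nlinarith
      · exact le_min (le_min (by nlinarith) hQu2) (by linarith)
  linarith [key]
end

section
/- Let n ≥ 1, q_max > 0, 0 ≤ Q_min ≤ Q_max ≤ n·q_max, and let x_0,...,x_{n-1} be any real numbers. Define recursively Q_0 = 0 and Q_{k+1} = Q_k + q_k where q_k = A_k^-(Q_k) + (A_k^+(Q_k) - A_k^-(Q_k))·σ(x_k), with A_k^-(Q) = max(Q^down(t_{k+1}), Q) - Q, A_k^+(Q) = min(Q^up(t_{k+1}), Q + q_max) - Q and σ the logistic function. Then for every 0 ≤ k ≤ n, Q^down(t_k) ≤ Q_k ≤ Q^up(t_k); in particular Q_min ≤ Q_n ≤ Q_max, so the parametric strategy always satisfies the global constraints. -/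
set_option maxHeartbeats 1600000 in
theorem parametric_strategy_admissible (n : ℕ) (hn : 1 ≤ n)
    (qmax Qmin Qmax : ℝ) (hq : 0 < qmax)
    (h0 : 0 ≤ Qmin) (h1 : Qmin ≤ Qmax) (h2 : Qmax ≤ n * qmax)
    (Qdown Qup : ℕ → ℝ)
    (hd0 : Qdown 0 = 0) (hdn : Qdown n = Qmin)
    (hd : ∀ k, 1 ≤ k → k ≤ n - 1 → Qdown k = max 0 (Qmin - ((n : ℝ) - k) * qmax))
    (hu0 : Qup 0 = 0) (hun : Qup n = Qmax)
    (hu : ∀ k, 1 ≤ k → k ≤ n - 1 → Qup k = min ((k : ℝ) * qmax) Qmax)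
    (x : ℕ → ℝ) (Q : ℕ → ℝ) (hQ0 : Q 0 = 0)
    (hrec : ∀ k < n, Q (k + 1) = Q k +
      ((max (Qdown (k + 1)) (Q k) - Q k) +
        ((min (Qup (k + 1)) (Q k + qmax) - Q k) - (max (Qdown (k + 1)) (Q k) - Q k)) *
          (1 / (1 + Real.exp (-(x k)))))) :
    (∀ k ≤ n, Qdown k ≤ Q k ∧ Q k ≤ Qup k) ∧
    Qmin ≤ Q n ∧ Q n ≤ Qmax := by
  have hQminn : Qmin ≤ (n : ℝ) * qmax := le_trans h1 h2
  -- lower bound on Qdown k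
  have hdlow : ∀ k ≤ n, 0 ≤ Qdown k ∧ Qmin - ((n : ℝ) - k) * qmax ≤ Qdown k := by
    intro k hk
    rcases Nat.eq_zero_or_pos k with rfl | hk1
    · constructor
      · rw [hd0]
      · rw [hd0]; push_cast
        nlinarith
    rcases eq_or_lt_of_le hk with rfl | hk2
    · rw [hdn]; constructor
      · exact h0
      · nlinarith [sub_nonneg.mpr ((Nat.cast_le (α := ℝ)).mpr (le_refl k))]
    · have : k ≤ n - 1 := by omega
      rw [hd k hk1 this]
      exact ⟨le_max_left _ _, le_max_right _ _⟩
  have hmain : ∀ k ≤ n, Qdown k ≤ Q k ∧ Q k ≤ Qup k := by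
    intro k hk
    induction k with
    | zero => rw [hQ0, hd0, hu0]; exact ⟨le_refl _, le_refl _⟩
    | succ k ih =>
      have hkn : k < n := hk
      have ihk := ih (le_of_lt hkn)
      obtain ⟨ihl, ihr⟩ := ihk
      have hcastk : (0 : ℝ) ≤ (n : ℝ) - k := by
        have : (k : ℝ) ≤ n := (Nat.cast_le (α := ℝ)).mpr (le_of_lt hkn)
        linarith
      -- key fact 1 : Qdown (k+1) ≤ Q k + qmax
      have key1 : Qdown (k + 1) ≤ Q k + qmax := by
        have h := hdlow k (le_of_lt hkn)
        rcases eq_or_lt_of_le hk with heq | hlt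
        · rw [heq, hdn]
          have : ((k : ℝ) + 1) = n := by
            have : ((k + 1 : ℕ) : ℝ) = ((n : ℕ) : ℝ) := by rw [heq]
            push_cast at this; linarith
          nlinarith [h.2]
        · have hle : k + 1 ≤ n - 1 := by omega
          rw [hd (k + 1) (by omega) hle]
          push_cast
          apply max_le
          · nlinarith [h.1]
          · nlinarith [h.2]
      -- key fact 2 : Qdown (k+1) ≤ Qup (k+1)
      have key2 : Qdown (k + 1) ≤ Qup (k + 1) := by
        rcases eq_or_lt_of_le hk with heq | hlt
        · rw [heq, hdn, hun]; exact h1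
        · have hle : k + 1 ≤ n - 1 := by omega
          have hc : (k : ℝ) + 1 + 1 ≤ n := by
            have : ((k + 2 : ℕ) : ℝ) ≤ n := (Nat.cast_le (α := ℝ)).mpr (by omega)
            push_cast at this; linarith
          rw [hd (k + 1) (by omega) hle, hu (k + 1) (by omega) hle]
          push_cast
          apply max_le <;> apply le_min
          · positivity
          · linarith
          · nlinarith
          · nlinarith
      -- key fact 3 : Q k ≤ Qup (k+1)
      have key3 : Q k ≤ Qup (k + 1) := by
        refine le_trans ihr ?_
        rcases Nat.eq_zero_or_pos k with rfl | hk1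
        · rw [hu0]
          rcases eq_or_lt_of_le hk with heq | hlt
          · rw [heq, hun]; linarith
          · rw [hu 1 (by omega) (by omega)]
            push_cast
            apply le_min <;> nlinarith
        · rw [hu k hk1 (by omega)]
          rcases eq_or_lt_of_le hk with heq | hlt
          · rw [heq, hun]; exact min_le_right _ _
          · rw [hu (k + 1) (by omega) (by omega)]
            push_cast
            apply le_min
            · exact le_trans (min_le_left _ _) (by nlinarith)
            · exact min_le_right _ _
      -- sigmoid in [0,1]
      have hs0 : 0 ≤ 1 / (1 + Real.exp (-(x k))) := by positivity
      have hs1 : 1 / (1 + Real.exp (-(x k))) ≤ 1 := by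
        rw [div_le_one (by positivity)]
        nlinarith [Real.exp_pos (-(x k))]
      have hrk := hrec k hkn
      set s := 1 / (1 + Real.exp (-(x k))) with hs
      set L := max (Qdown (k + 1)) (Q k) with hL
      set U := min (Qup (k + 1)) (Q k + qmax) with hU
      have hdL : Qdown (k + 1) ≤ L := le_max_left _ _
      have hdU : Qdown (k + 1) ≤ U := le_min key2 key1
      have hLu : L ≤ Qup (k + 1) := max_le key2 key3
      have hUu : U ≤ Qup (k + 1) := min_le_left _ _
      have heq : Q (k + 1) = L + (U - L) * s := by rw [hrk]; ring
      constructor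
      · rw [heq]
        nlinarith [mul_nonneg (by linarith : (0:ℝ) ≤ 1 - s)
            (by linarith : (0:ℝ) ≤ L - Qdown (k + 1)),
          mul_nonneg hs0 (by linarith : (0:ℝ) ≤ U - Qdown (k + 1))]
      · rw [heq]
        nlinarith [mul_nonneg (by linarith : (0:ℝ) ≤ 1 - s)
            (by linarith : (0:ℝ) ≤ Qup (k + 1) - L),
          mul_nonneg hs0 (by linarith : (0:ℝ) ≤ Qup (k + 1) - U)]
  refine ⟨hmain, ?_, ?_⟩
  · rw [← hdn]; exact (hmain n le_rfl).1
  · rw [← hun]; exact (hmain n le_rfl).2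
end

section
/- Under the same setting, if instead of the sigmoid one uses the bang-bang rule q_k = A_k^-(Q_k) + (A_k^+(Q_k) - A_k^-(Q_k))·1_{x_k ≥ 0}, the resulting cumulative consumptions still satisfy Q^down(t_k) ≤ Q_k ≤ Q^up(t_k) for all 0 ≤ k ≤ n, and each q_k ∈ {A_k^-(Q_k), A_k^+(Q_k)}. -/
theorem bangbang_strategy_admissible (n : ℕ) (hn : 1 ≤ n)
    (qmax Qmin Qmax : ℝ) (hq : 0 < qmax)
    (h0 : 0 ≤ Qmin) (h1 : Qmin ≤ Qmax) (h2 : Qmax ≤ n * qmax)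
    (Qdown Qup : ℕ → ℝ)
    (hd0 : Qdown 0 = 0) (hdn : Qdown n = Qmin)
    (hd : ∀ k, 1 ≤ k → k ≤ n - 1 → Qdown k = max 0 (Qmin - ((n : ℝ) - k) * qmax))
    (hu0 : Qup 0 = 0) (hun : Qup n = Qmax)
    (hu : ∀ k, 1 ≤ k → k ≤ n - 1 → Qup k = min ((k : ℝ) * qmax) Qmax)
    (x : ℕ → ℝ) (Q : ℕ → ℝ) (hQ0 : Q 0 = 0)
    (hrec : ∀ k < n, Q (k + 1) = Q k +
      ((max (Qdown (k + 1)) (Q k) - Q k) +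
        ((min (Qup (k + 1)) (Q k + qmax) - Q k) - (max (Qdown (k + 1)) (Q k) - Q k)) *
          (if 0 ≤ x k then (1 : ℝ) else 0))) :
    (∀ k ≤ n, Qdown k ≤ Q k ∧ Q k ≤ Qup k) ∧
    (∀ k < n, Q (k + 1) - Q k = max (Qdown (k + 1)) (Q k) - Q k ∨
      Q (k + 1) - Q k = min (Qup (k + 1)) (Q k + qmax) - Q k) := by
  have hn' : (1 : ℝ) ≤ n := by exact_mod_cast hn
  -- closed forms valid on all of [0, n]
  have hdf : ∀ k ≤ n, Qdown k = max 0 (Qmin - ((n : ℝ) - k) * qmax) := by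
    intro k hk
    rcases Nat.eq_zero_or_pos k with rfl | hk1
    · rw [hd0]
      symm
      rw [max_eq_left]
      push_cast
      nlinarith
    · rcases eq_or_lt_of_le hk with rfl | hk2
      · rw [hdn]
        symm
        rw [max_eq_right]
        · ring_nf
        · simp; nlinarith
      · exact hd k hk1 (Nat.le_sub_one_of_lt hk2)
  have huf : ∀ k ≤ n, Qup k = min ((k : ℝ) * qmax) Qmax := by
    intro k hk
    rcases Nat.eq_zero_or_pos k with rfl | hk1
    · rw [hu0]
      symm
      push_cast
      rw [zero_mul, min_eq_left (le_trans h0 h1)]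
    · rcases eq_or_lt_of_le hk with rfl | hk2
      · rw [hun]
        symm
        exact min_eq_right h2
      · exact hu k hk1 (Nat.le_sub_one_of_lt hk2)
  -- Qdown ≤ Qup
  have hDU : ∀ k ≤ n, Qdown k ≤ Qup k := by
    intro k hk
    rw [hdf k hk, huf k hk]
    have hk0 : (0 : ℝ) ≤ (k : ℝ) := Nat.cast_nonneg k
    have hkn : (k : ℝ) ≤ n := by exact_mod_cast hk
    apply max_le
    · exact le_min (by positivity) (le_trans h0 h1)
    · apply le_min <;> nlinarith
  -- Qup is nondecreasing
  have hUmono : ∀ k, k + 1 ≤ n → Qup k ≤ Qup (k + 1) := by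
    intro k hk
    rw [huf k (le_trans (Nat.le_succ k) hk), huf (k + 1) hk]
    push_cast
    exact min_le_min (by nlinarith [Nat.cast_nonneg (α := ℝ) k]) le_rfl
  -- Qdown increases by at most qmax
  have hDstep : ∀ k, k + 1 ≤ n → Qdown (k + 1) ≤ Qdown k + qmax := by
    intro k hk
    rw [hdf k (le_trans (Nat.le_succ k) hk), hdf (k + 1) hk]
    push_cast
    apply max_le
    · have := le_max_left (0 : ℝ) (Qmin - ((n : ℝ) - k) * qmax)
      linarith
    · have := le_max_right (0 : ℝ) (Qmin - ((n : ℝ) - k) * qmax)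
      nlinarith
  -- each step is one of the two extremes
  have hstep : ∀ k < n, Q (k + 1) = max (Qdown (k + 1)) (Q k) ∨
      Q (k + 1) = min (Qup (k + 1)) (Q k + qmax) := by
    intro k hk
    rw [hrec k hk]
    split
    · right; ring
    · left; ring
  have hinv : ∀ k ≤ n, Qdown k ≤ Q k ∧ Q k ≤ Qup k := by
    intro k
    induction k with
    | zero => intro _; rw [hQ0, hd0, hu0]; exact ⟨le_refl 0, le_refl 0⟩
    | succ k ih =>
      intro hk
      have hk' : k < n := hk
      obtain ⟨ihl, ihr⟩ := ih (le_of_lt hk')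
      rcases hstep k hk' with h | h
      · rw [h]
        constructor
        · exact le_max_left _ _
        · exact max_le (hDU (k + 1) hk) (le_trans ihr (hUmono k hk))
      · rw [h]
        constructor
        · exact le_min (hDU (k + 1) hk) (le_trans (hDstep k hk) (by linarith))
        · exact min_le_left _ _
  refine ⟨hinv, fun k hk => ?_⟩
  rcases hstep k hk with h | h
  · left; rw [h]
  · right; rw [h]
end
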